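/- arXiv:1310.6257 — 5 statements merged into one kernel-verified Lean document; each statement's English description precedes it below -/
import Mathlib

section
/- Let D1, D2, D3 be events that are increasing (monotone) Boolean functions of independent Bernoulli variables x2,...,xn, and let x1 be an independent Bernoulli variable with probability p1. Define φ = (x1 ∧ D1) ∨ (x1 ∧ D2) ∨ D3 and φ' = (x1 ∧ D1) ∨ (x1' ∧ D2) ∨ D3 where x1' is a fresh independent Bernoulli variable with the same probability p1. Then P[φ'] − P[φ] = p1(1 − p1)·(P[D1 ∧ D2] − P[D1 ∧ D2 ∧ D3]) ≥ 0. -/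
open MeasureTheory ProbabilityTheory MeasurableSpace

/-!
Write `φ = A ∩ (D1 ∪ D2) ∪ D3` and `φ' = (A ∩ D1) ∪ (A' ∩ D2) ∪ D3`. Then
`φ' \ φ = (Aᶜ ∩ A') ∩ (D2 \ D3)` and `φ \ φ' = (A ∩ A'ᶜ) ∩ ((D2 \ D1) \ D3)`, and by
independence both `Aᶜ ∩ A'` and `A ∩ A'ᶜ` have probability `p1 (1 - p1)`. Hence
`P[φ'] - P[φ] = P[φ' \ φ] - P[φ \ φ'] = p1 (1 - p1) P[(D1 ∩ D2) \ D3]`.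
-/

namespace ProbabilityTheory

lemma iIndep.measureReal_inter_inter {Ω : Type*} {_ : MeasurableSpace Ω} {μ : Measure Ω}
    {m : Fin 3 → MeasurableSpace Ω} (h : iIndep m μ) {s₀ s₁ s₂ : Set Ω}
    (h₀ : MeasurableSet[m 0] s₀) (h₁ : MeasurableSet[m 1] s₁)
    (h₂ : MeasurableSet[m 2] s₂) :
    μ.real (s₀ ∩ s₁ ∩ s₂) = μ.real s₀ * μ.real s₁ * μ.real s₂ := by
  have h_inter : (⋂ i, ![s₀, s₁, s₂] i) = s₀ ∩ s₁ ∩ s₂ := by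
    ext; simp [Fin.forall_fin_succ, and_assoc]
  have h_prod := h.meas_iInter (s := ![s₀, s₁, s₂])
    (Fin.forall_fin_succ.2 ⟨h₀, Fin.forall_fin_two.2 ⟨h₁, h₂⟩⟩)
  rw [h_inter, Fin.prod_univ_three] at h_prod
  simp [measureReal_def, h_prod, ENNReal.toReal_mul]

end ProbabilityTheory

namespace MeasureTheory

variable {Ω : Type*} [MeasurableSpace Ω] {μ : Measure Ω} [IsFiniteMeasure μ] {s t u : Set Ω}

lemma measureReal_sub_measureReal_eq_sdiff_sub_sdiff (hs : MeasurableSet s) (ht : MeasurableSet t) :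
    μ.real s - μ.real t = μ.real (s \ t) - μ.real (t \ s) := by
  have hs' := measureReal_inter_add_sdiff (s := s) (μ := μ) ht
  have ht' := measureReal_inter_add_sdiff (s := t) (μ := μ) hs
  rw [Set.inter_comm] at ht'
  linarith

lemma measureReal_sdiff_sub_measureReal_sdiff_sdiff (hs : MeasurableSet s)
    (hu : MeasurableSet u) :
    μ.real (t \ u) - μ.real ((t \ s) \ u) = μ.real (s ∩ t) - μ.real (s ∩ t ∩ u) := by
  have ht := measureReal_inter_add_sdiff (s := t \ u) (μ := μ) hs
  have hst := measureReal_inter_add_sdiff (s := s ∩ t) (μ := μ) hu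
  rw [Set.sdiff_sdiff_comm, Set.inter_comm, ← Set.inter_sdiff_assoc] at ht
  linarith

end MeasureTheory

/-- With `x1` (event `A`) and its fresh independent copy `x1'` (event `A'`)
both of probability `p1`, and events `D1, D2, D3` independent of them, for
`φ = (x1 ∧ D1) ∨ (x1 ∧ D2) ∨ D3` and `φ' = (x1 ∧ D1) ∨ (x1' ∧ D2) ∨ D3` we have
`P[φ'] − P[φ] = p1(1 − p1)·(P[D1 ∧ D2] − P[D1 ∧ D2 ∧ D3]) ≥ 0`. -/
theorem single_step_dissociation_difference
    {Ω : Type*} [MeasurableSpace Ω] (μ : Measure Ω) [IsProbabilityMeasure μ]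
    (A A' D1 D2 D3 : Set Ω)
    (hA : MeasurableSet A) (hA' : MeasurableSet A')
    (hD1 : MeasurableSet D1) (hD2 : MeasurableSet D2) (hD3 : MeasurableSet D3)
    (p1 : ℝ) (hp : (μ A).toReal = p1) (hp' : (μ A').toReal = p1)
    (hIndep : iIndep
      (fun i : Fin 3 =>
        if i = 0 then generateFrom {A}
        else if i = 1 then generateFrom {A'}
        else generateFrom {D1, D2, D3}) μ) :
    (μ ((A ∩ D1) ∪ (A' ∩ D2) ∪ D3)).toReal - (μ ((A ∩ D1) ∪ (A ∩ D2) ∪ D3)).toReal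
        = p1 * (1 - p1) * ((μ (D1 ∩ D2)).toReal - (μ (D1 ∩ D2 ∩ D3)).toReal) ∧
    0 ≤ p1 * (1 - p1) * ((μ (D1 ∩ D2)).toReal - (μ (D1 ∩ D2 ∩ D3)).toReal) := by
  simp only [← measureReal_def] at hp hp' ⊢
  have hφ'_sdiff : (A ∩ D1 ∪ A' ∩ D2 ∪ D3) \ (A ∩ D1 ∪ A ∩ D2 ∪ D3) =
      Aᶜ ∩ A' ∩ (D2 \ D3) := by
    ext; simp only [Set.mem_sdiff, Set.mem_union, Set.mem_inter_iff, Set.mem_compl_iff]; tauto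
  have hφ_sdiff : (A ∩ D1 ∪ A ∩ D2 ∪ D3) \ (A ∩ D1 ∪ A' ∩ D2 ∪ D3) =
      A ∩ A'ᶜ ∩ ((D2 \ D1) \ D3) := by
    ext; simp only [Set.mem_sdiff, Set.mem_union, Set.mem_inter_iff, Set.mem_compl_iff]; tauto
  have hA₀ : MeasurableSet[generateFrom {A}] A := measurableSet_generateFrom rfl
  have hA₁ : MeasurableSet[generateFrom {A'}] A' := measurableSet_generateFrom rfl
  have hD₁ : MeasurableSet[generateFrom {D1, D2, D3}] D1 := measurableSet_generateFrom (by simp)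
  have hD₂ : MeasurableSet[generateFrom {D1, D2, D3}] D2 := measurableSet_generateFrom (by simp)
  have hD₃ : MeasurableSet[generateFrom {D1, D2, D3}] D3 := measurableSet_generateFrom (by simp)
  have hdiff : μ.real (A ∩ D1 ∪ A' ∩ D2 ∪ D3) - μ.real (A ∩ D1 ∪ A ∩ D2 ∪ D3) =
      p1 * (1 - p1) * (μ.real (D1 ∩ D2) - μ.real (D1 ∩ D2 ∩ D3)) := by
    rw [measureReal_sub_measureReal_eq_sdiff_sub_sdiff
        (((hA.inter hD1).union (hA'.inter hD2)).union hD3)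
        (((hA.inter hD1).union (hA.inter hD2)).union hD3),
      hφ'_sdiff, hφ_sdiff,
      hIndep.measureReal_inter_inter hA₀.compl hA₁ (hD₂.diff hD₃),
      hIndep.measureReal_inter_inter hA₀ hA₁.compl ((hD₂.diff hD₁).diff hD₃),
      probReal_compl_eq_one_sub hA, probReal_compl_eq_one_sub hA', hp, hp',
      ← measureReal_sdiff_sub_measureReal_sdiff_sdiff hD1 hD3]
    ring
  refine ⟨hdiff, mul_nonneg (mul_nonneg ?_ ?_) ?_⟩
  · exact hp ▸ measureReal_nonneg
  · exact sub_nonneg.2 (hp ▸ measureReal_le_one)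
  · exact sub_nonneg.2 (measureReal_mono Set.inter_subset_left)
end

section
/- Single-step dissociation of a positive DNF cannot decrease its probability: if φ = (x1 ∧ D1) ∨ (x1 ∧ D2) ∨ D3 and φ' = (x1 ∧ D1) ∨ (x1' ∧ D2) ∨ D3, where D1, D2, D3 are positive Boolean formulas over variables x2,...,xn and x1' is an independent copy of x1, then P[φ'] ≥ P[φ]. -/
/-!
Both formulas agree unless `D2` holds, `D3` fails and exactly one of `x1`, `x1'` is true.
The event where `φ` holds and `φ'` fails lies in `{x1 ∧ ¬x1'} ∩ (D2 \ D3)`, while `φ'` holds and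
`φ` fails on all of `{¬x1 ∧ x1'} ∩ (D2 \ D3)`. Since `x1` and `x1'` are independent copies,
independent of the `D`'s, these two events have the same probability `p1 (1 - p1) P[D2 \ D3]`.
-/

open MeasureTheory ProbabilityTheory MeasurableSpace

theorem MeasureTheory.measure_le_of_measure_sdiff_le {α : Type*} [MeasurableSpace α]
    {μ : Measure α} {s t : Set α} (hs : MeasurableSet s) (h : μ (s \ t) ≤ μ (t \ s)) :
    μ s ≤ μ t :=
  calc μ s ≤ μ (s ∩ t) + μ (s \ t) := measure_le_inter_add_sdiff μ s t
    _ ≤ μ (t ∩ s) + μ (t \ s) := by rw [Set.inter_comm]; gcongr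
    _ = μ t := measure_inter_add_sdiff t hs

namespace ProbabilityTheory

variable {Ω : Type*} {_ : MeasurableSpace Ω} {μ : Measure Ω} {m : Fin 3 → MeasurableSpace Ω}
  {s₀ s₁ s₂ : Set Ω}

theorem iIndep.measure_inter_three (h : iIndep m μ) (h₀ : MeasurableSet[m 0] s₀)
    (h₁ : MeasurableSet[m 1] s₁) (h₂ : MeasurableSet[m 2] s₂) :
    μ (s₀ ∩ s₁ ∩ s₂) = μ s₀ * μ s₁ * μ s₂ := by
  have hs : ∀ i, MeasurableSet[m i] (![s₀, s₁, s₂] i) := by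
    intro i; fin_cases i <;> assumption
  have hinter : ⋂ i, ![s₀, s₁, s₂] i = s₀ ∩ s₁ ∩ s₂ := by
    ext; simp [Fin.forall_fin_succ, and_assoc]
  rw [← hinter, h.meas_iInter hs, Fin.prod_univ_three]
  rfl

theorem iIndep.measure_inter_compl_swap [IsProbabilityMeasure μ] (h : iIndep m μ)
    (h₀ : MeasurableSet[m 0] s₀) (h₁ : MeasurableSet[m 1] s₁) (h₂ : MeasurableSet[m 2] s₂)
    (hs₀ : MeasurableSet s₀) (hs₁ : MeasurableSet s₁) (heq : μ s₀ = μ s₁) :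
    μ (s₀ ∩ s₁ᶜ ∩ s₂) = μ (s₀ᶜ ∩ s₁ ∩ s₂) := by
  rw [h.measure_inter_three h₀ h₁.compl h₂, h.measure_inter_three h₀.compl h₁ h₂,
    prob_compl_eq_one_sub hs₀, prob_compl_eq_one_sub hs₁, heq, mul_comm (μ s₁)]

end ProbabilityTheory

/-- Single-step dissociation of a positive DNF cannot decrease its probability:
for `φ = (x1 ∧ D1) ∨ (x1 ∧ D2) ∨ D3` and `φ' = (x1 ∧ D1) ∨ (x1' ∧ D2) ∨ D3`, where `x1'`
(event `A'`) is an independent copy of `x1` (event `A`) and `D1, D2, D3` are events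
independent of both, `P[φ'] ≥ P[φ]`. -/
theorem single_step_dissociation_upper_bound
    {Ω : Type*} [MeasurableSpace Ω] (μ : Measure Ω) [IsProbabilityMeasure μ]
    (A A' D1 D2 D3 : Set Ω)
    (hA : MeasurableSet A) (hA' : MeasurableSet A')
    (hD1 : MeasurableSet D1) (hD2 : MeasurableSet D2) (hD3 : MeasurableSet D3)
    (p1 : ℝ) (hp : (μ A).toReal = p1) (hp' : (μ A').toReal = p1)
    (hIndep : iIndep
      (fun i : Fin 3 =>
        if i = 0 then generateFrom {A}
        else if i = 1 then generateFrom {A'}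
        else generateFrom {D1, D2, D3}) μ) :
    (μ ((A ∩ D1) ∪ (A ∩ D2) ∪ D3)).toReal ≤
      (μ ((A ∩ D1) ∪ (A' ∩ D2) ∪ D3)).toReal := by
  have hAA' : μ A = μ A' := (ENNReal.toReal_eq_toReal_iff' (measure_ne_top μ A)
    (measure_ne_top μ A')).1 (hp.trans hp'.symm)
  have hD : MeasurableSet[generateFrom {D1, D2, D3}] (D2 \ D3) :=
    (measurableSet_generateFrom (by simp)).diff (measurableSet_generateFrom (by simp))
  have hswap := hIndep.measure_inter_compl_swap (measurableSet_generateFrom rfl)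
    (measurableSet_generateFrom rfl) hD hA hA' hAA'
  refine ENNReal.toReal_mono (measure_ne_top μ _) <|
    measure_le_of_measure_sdiff_le (((hA.inter hD1).union (hA.inter hD2)).union hD3) ?_
  calc μ (((A ∩ D1) ∪ (A ∩ D2) ∪ D3) \ ((A ∩ D1) ∪ (A' ∩ D2) ∪ D3))
      ≤ μ (A ∩ A'ᶜ ∩ (D2 \ D3)) := by
        refine measure_mono fun x hx => ?_
        simp only [Set.mem_sdiff, Set.mem_union, Set.mem_inter_iff, Set.mem_compl_iff] at hx ⊢
        tauto
    _ = μ (Aᶜ ∩ A' ∩ (D2 \ D3)) := hswap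
    _ ≤ μ (((A ∩ D1) ∪ (A' ∩ D2) ∪ D3) \ ((A ∩ D1) ∪ (A ∩ D2) ∪ D3)) := by
        refine measure_mono fun x hx => ?_
        simp only [Set.mem_sdiff, Set.mem_union, Set.mem_inter_iff, Set.mem_compl_iff] at hx ⊢
        tauto
end

section
/- Let φ be a positive DNF over independent Bernoulli variables and let φ' be any dissociation of φ, i.e., a positive DNF over a variable set X' together with a surjective substitution θ: X' → X such that φ'(θ(X')) = φ(X), where each variable x' ∈ X' is an independent Bernoulli variable with probability P[x'] = P[θ(x')]. Then P[φ'] ≥ P[φ]. -/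
/-!
Both probabilities are expectations, over the possible worlds, of the indicator of the formula.
A dissociation is undone one step at a time by merging two copies `a`, `b` of a variable into
`b`. No term contains both copies, so once all other variables are fixed the dissociated formula
reads `A ∨ (B ∧ a) ∨ (C ∧ b)` and the merged one `A ∨ ((B ∨ C) ∧ b)`; as `a` and `b` have the same
probability `x`, the first holds with probability at least `x · [B ∨ C]`. When no two variables
of the dissociation are copies of each other it is a mere renaming, which preserves probability.
-/

open Finset

/-- The probability of a positive DNF with set of terms `T` over independent Bernoulli
variables with probabilities `p`, computed by inclusion-exclusion. -/
noncomputable def dnfProb {ι : Type*} [DecidableEq ι] (T : Finset (Finset ι))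
    (p : ι → ℝ) : ℝ :=
  ∑ S ∈ T.powerset.erase ∅, (-1 : ℝ) ^ (S.card + 1) * ∏ i ∈ S.sup id, p i

lemma sup_id_image_image {α β : Type*} [DecidableEq α] [DecidableEq β]
    (S : Finset (Finset α)) (f : α → β) : (S.image (image f)).sup id = (S.sup id).image f := by
  rw [sup_eq_biUnion, sup_eq_biUnion, biUnion_image, image_biUnion]
  rfl

section UpdateId

variable {α : Type*} [DecidableEq α] {a b : α}

lemma comp_update_id_of_eq {β : Type*} {f : α → β} (h : f a = f b) :
    f ∘ Function.update id a b = f := by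
  rw [Function.comp_update, Function.comp_id, ← h, Function.update_eq_self]

lemma image_update_id_subset_erase {s : Finset α} (hab : a ≠ b) (hb : b ∈ s) :
    s.image (Function.update id a b) ⊆ s.erase a := by
  intro y hy
  obtain ⟨x, hx, rfl⟩ := mem_image.1 hy
  by_cases hxa : x = a
  · rw [hxa, Function.update_self]
    exact mem_erase.2 ⟨hab.symm, hb⟩
  · rw [Function.update_of_ne hxa]
    exact mem_erase.2 ⟨hxa, hx⟩

lemma subset_of_image_update_id_subset {c W : Finset α} (hbW : b ∉ W)
    (h : c.image (Function.update id a b) ⊆ W) : c ⊆ W := by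
  intro x hx
  have hx' := h (mem_image_of_mem _ hx)
  by_cases hxa : x = a
  · rw [hxa, Function.update_self] at hx'
    exact absurd hx' hbW
  · rwa [Function.update_of_ne hxa] at hx'

lemma subset_insert_of_image_update_id_subset_insert {c W : Finset α} (hc : a ∈ c → b ∉ c)
    (h : c.image (Function.update id a b) ⊆ insert b W) :
    c ⊆ insert a W ∨ c ⊆ insert b W := by
  by_cases hac : a ∈ c
  · refine Or.inl fun x hx => ?_
    by_cases hxa : x = a
    · exact hxa ▸ mem_insert_self a W
    · have hx' := h (mem_image_of_mem _ hx)
      rw [Function.update_of_ne hxa] at hx'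
      rcases mem_insert.1 hx' with rfl | hxW
      · exact absurd hx (hc hac)
      · exact mem_insert_of_mem hxW
  · refine Or.inr fun x hx => ?_
    have hx' := h (mem_image_of_mem _ hx)
    rwa [Function.update_of_ne (ne_of_mem_of_not_mem hx hac)] at hx'

end UpdateId

section PossibleWorlds

variable {κ : Type*} [DecidableEq κ]

noncomputable def worldProb (V : Finset κ) (q : κ → ℝ) (W : Finset κ) : ℝ :=
  (∏ y ∈ W, q y) * ∏ y ∈ V \ W, (1 - q y)

noncomputable def worldExpect (V : Finset κ) (q : κ → ℝ) (f : Finset κ → ℝ) : ℝ :=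
  ∑ W ∈ V.powerset, worldProb V q W * f W

variable {V : Finset κ} {q : κ → ℝ}

lemma worldProb_nonneg (hq : ∀ y, 0 ≤ q y ∧ q y ≤ 1) (W : Finset κ) : 0 ≤ worldProb V q W :=
  mul_nonneg (prod_nonneg fun y _ => (hq y).1) (prod_nonneg fun y _ => sub_nonneg.2 (hq y).2)

lemma worldExpect_mono (hq : ∀ y, 0 ≤ q y ∧ q y ≤ 1) {f g : Finset κ → ℝ}
    (hfg : ∀ W ⊆ V, f W ≤ g W) : worldExpect V q f ≤ worldExpect V q g :=
  sum_le_sum fun W hW =>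
    mul_le_mul_of_nonneg_left (hfg W (mem_powerset.1 hW)) (worldProb_nonneg hq W)

lemma worldExpect_insert {a : κ} (ha : a ∉ V) (q : κ → ℝ) (f : Finset κ → ℝ) :
    worldExpect (insert a V) q f
      = worldExpect V q (fun W => q a * f (insert a W) + (1 - q a) * f W) := by
  unfold worldExpect
  rw [sum_powerset_insert ha, add_comm, ← sum_add_distrib]
  refine sum_congr rfl fun W hW => ?_
  have haW : a ∉ W := fun h => ha (mem_powerset.1 hW h)
  have haVW : a ∉ V \ W := fun h => ha (mem_sdiff.1 h).1
  simp only [worldProb, insert_sdiff_insert, insert_sdiff_of_notMem _ haW,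
    sdiff_insert_of_notMem ha, prod_insert haW, prod_insert haVW]
  ring

lemma worldExpect_subset_indicator {U : Finset κ} (hU : U ⊆ V) (q : κ → ℝ) :
    worldExpect V q (fun W => if U ⊆ W then 1 else 0) = ∏ y ∈ U, q y := by
  have hprod : ∏ y ∈ V, (q y + if y ∈ U then 0 else 1 - q y) = ∏ y ∈ U, q y :=
    calc _ = ∏ y ∈ V, (if y ∈ U then q y else 1) :=
          prod_congr rfl fun y _ => by split_ifs <;> ring
      _ = _ := by rw [prod_ite_mem, inter_eq_right.2 hU]
  rw [← hprod, prod_add, worldExpect]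
  refine sum_congr rfl fun W _ => ?_
  by_cases hUW : U ⊆ W
  · rw [if_pos hUW, mul_one, worldProb]
    congr 1
    exact prod_congr rfl fun y hy => (if_neg fun hyU => (mem_sdiff.1 hy).2 (hUW hyU)).symm
  · obtain ⟨y, hyU, hyW⟩ := not_subset.1 hUW
    have hy : (if y ∈ U then (0 : ℝ) else 1 - q y) = 0 := if_pos hyU
    rw [if_neg hUW, mul_zero, prod_eq_zero (mem_sdiff.2 ⟨hU hyU, hyW⟩) hy, mul_zero]

end PossibleWorlds

/-- `P_s` (resp. `M_s`) says that the dissociated (resp. merged) formula holds once the copies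
in `s ⊆ {a, b}` are added to a world of the other variables; with `x` the probability of each
copy, the two sides are the conditional probabilities of the merged and of the dissociated
formula given that world. -/
lemma merge_conditional_prob_le {x : ℝ} (hx0 : 0 ≤ x) (hx1 : x ≤ 1)
    {P₀ Pa Pb Pab M₀ Mb : Prop} [Decidable P₀] [Decidable Pa] [Decidable Pb] [Decidable Pab]
    [Decidable M₀] [Decidable Mb] (hM₀ : M₀ → P₀) (hMb : Mb → Pa ∨ Pb) (hPa : P₀ → Pa)
    (hPb : P₀ → Pb) (hPab : Pa → Pab) (hPba : Pb → Pab) :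
    x * (if Mb then 1 else 0) + (1 - x) * (if M₀ then 1 else 0)
      ≤ x * (x * (if Pab then 1 else 0) + (1 - x) * (if Pb then 1 else 0))
        + (1 - x) * (x * (if Pa then 1 else 0) + (1 - x) * (if P₀ then 1 else 0)) := by
  by_cases h₀ : P₀
  · simp only [if_pos h₀, if_pos (hPa h₀), if_pos (hPb h₀), if_pos (hPab (hPa h₀))]
    split_ifs <;> nlinarith
  · simp only [if_neg h₀, if_neg (mt hM₀ h₀)]
    split_ifs <;> first | nlinarith | tauto

section Dnf

variable {κ : Type*} [DecidableEq κ]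

noncomputable def dnfIndicator (T : Finset (Finset κ)) (W : Finset κ) : ℝ :=
  if ∃ c ∈ T, c ⊆ W then 1 else 0

lemma dnfIndicator_eq_sum_powerset (T : Finset (Finset κ)) (W : Finset κ) :
    dnfIndicator T W
      = ∑ S ∈ T.powerset.erase ∅, (-1 : ℝ) ^ (S.card + 1) * if S.sup id ⊆ W then 1 else 0 := by
  have h := indicator_biUnion_eq_sum_powerset T (fun c => {W : Finset κ | c ⊆ W})
    (1 : Finset κ → ℝ) W
  have hfilter : T.powerset.filter (·.Nonempty) = T.powerset.erase ∅ := by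
    ext S
    simp [nonempty_iff_ne_empty, and_comm]
  rw [hfilter] at h
  convert h using 1
  · simp [dnfIndicator, Set.indicator]
  · refine sum_congr rfl fun S _ => ?_
    simp [Set.indicator, Finset.sup_le_iff]

theorem dnfProb_eq_worldExpect {T : Finset (Finset κ)} {V : Finset κ} (hV : T.sup id ⊆ V)
    (q : κ → ℝ) : dnfProb T q = worldExpect V q (dnfIndicator T) := by
  have hterm : ∀ S ∈ T.powerset.erase ∅, ∏ y ∈ S.sup id, q y
      = worldExpect V q (fun W => if S.sup id ⊆ W then 1 else 0) := fun S hS =>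
    (worldExpect_subset_indicator
      ((sup_mono (mem_powerset.1 (mem_of_mem_erase hS))).trans hV) q).symm
  simp only [dnfProb, worldExpect, dnfIndicator_eq_sum_powerset, mul_sum]
  rw [sum_congr rfl fun S hS => by rw [hterm S hS, worldExpect, mul_sum], sum_comm]
  exact sum_congr rfl fun W _ => sum_congr rfl fun S _ => by ring

theorem dnfProb_image_update_id_le {T : Finset (Finset κ)} {q : κ → ℝ}
    (hq : ∀ y, 0 ≤ q y ∧ q y ≤ 1) {a b : κ} (hab : a ≠ b) (hqab : q a = q b)
    (hT : ∀ c ∈ T, a ∈ c → b ∉ c) :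
    dnfProb (T.image (image (Function.update id a b))) q ≤ dnfProb T q := by
  set V₀ := ((T.sup id).erase a).erase b
  have hb : b ∉ V₀ := notMem_erase b _
  have ha : a ∉ insert b V₀ := by simp [V₀, hab]
  have hVT : T.sup id ⊆ insert a (insert b V₀) := fun y hy => by
    simp only [V₀, mem_insert, mem_erase]
    tauto
  have hVM : (T.image (image (Function.update id a b))).sup id ⊆ insert b V₀ := by
    rw [sup_id_image_image]
    intro y hy
    obtain ⟨x, hxT, rfl⟩ := mem_image.1 hy
    by_cases hxa : x = a
    · simp [hxa]
    · simp only [Function.update_of_ne hxa, id, V₀, mem_insert, mem_erase]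
      tauto
  rw [dnfProb_eq_worldExpect hVM, dnfProb_eq_worldExpect hVT, worldExpect_insert hb,
    worldExpect_insert ha, worldExpect_insert hb, hqab]
  refine worldExpect_mono hq fun W hW => ?_
  have hbW : b ∉ W := fun h => hb (hW h)
  have mono : ∀ {U U' : Finset κ}, U ⊆ U' → (∃ c ∈ T, c ⊆ U) → ∃ c ∈ T, c ⊆ U' :=
    fun hU ⟨c, hc, h⟩ => ⟨c, hc, h.trans hU⟩
  refine merge_conditional_prob_le (hq b).1 (hq b).2 ?_ ?_ (mono (subset_insert _ _))
    (mono (subset_insert _ _)) (mono (insert_subset_insert _ (subset_insert _ _)))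
    (mono (subset_insert _ _))
  · rintro ⟨c', hc', h⟩
    obtain ⟨c, hc, rfl⟩ := mem_image.1 hc'
    exact ⟨c, hc, subset_of_image_update_id_subset hbW h⟩
  · rintro ⟨c', hc', h⟩
    obtain ⟨c, hc, rfl⟩ := mem_image.1 hc'
    exact (subset_insert_of_image_update_id_subset_insert (hT c hc) h).imp
      (⟨c, hc, ·⟩) (⟨c, hc, ·⟩)

end Dnf

theorem dnfProb_image_of_injOn {ι ι' : Type*} [DecidableEq ι] [DecidableEq ι']
    (T : Finset (Finset ι')) {f : ι' → ι} (hf : Set.InjOn f ↑(T.sup id)) (q : ι → ℝ) :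
    dnfProb (T.image (image f)) q = dnfProb T (q ∘ f) := by
  have hT : Set.InjOn (image f) ↑T := injOn_image_of_biUnion_injOn (by rwa [← sup_eq_biUnion])
  have hS : Set.InjOn (image (image f)) ↑(T.powerset.erase ∅) :=
    (image_injOn_powerset_of_injOn hT).mono (coe_subset.2 (erase_subset _ _))
  have hidx : (T.image (image f)).powerset.erase ∅
      = (T.powerset.erase ∅).image (image (image f)) := by
    rw [powerset_image]
    ext S
    simp only [mem_erase, mem_image, mem_powerset, ne_eq]
    constructor
    · rintro ⟨hS, R, hR, rfl⟩
      exact ⟨R, ⟨fun h => hS (by simp [h]), hR⟩, rfl⟩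
    · rintro ⟨R, ⟨hR, hRT⟩, rfl⟩
      exact ⟨by simpa using hR, R, hRT, rfl⟩
  rw [dnfProb, hidx, sum_image hS]
  refine sum_congr rfl fun S hS' => ?_
  have hST : S ⊆ T := mem_powerset.1 (mem_of_mem_erase hS')
  rw [card_image_of_injOn (hT.mono (by simpa using hST)), sup_id_image_image,
    prod_image (hf.mono (coe_subset.2 (sup_mono hST)))]
  rfl

theorem dnfProb_image_le {ι ι' : Type*} [DecidableEq ι] [DecidableEq ι']
    (T : Finset (Finset ι')) {θ : ι' → ι} (hθ : ∀ c ∈ T, Set.InjOn θ ↑c) {p : ι → ℝ}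
    (hp : ∀ i, 0 ≤ p i ∧ p i ≤ 1) :
    dnfProb (T.image (image θ)) p ≤ dnfProb T (p ∘ θ) := by
  induction hn : (T.sup id).card using Nat.strong_induction_on generalizing T with
  | _ n ih =>
    by_cases hinj : Set.InjOn θ ↑(T.sup id)
    · exact (dnfProb_image_of_injOn T hinj p).le
    simp only [Set.InjOn, mem_coe, not_forall] at hinj
    obtain ⟨a, ha, b, hb, hθab, hab⟩ := hinj
    have hθg := comp_update_id_of_eq hθab
    have hθg' : ∀ x, θ (Function.update id a b x) = θ x := congrFun hθg
    set T₁ := T.image (image (Function.update id a b))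
    have himg : T₁.image (image θ) = T.image (image θ) := by
      simp only [T₁, image_image, Function.comp_def, hθg']
    have hθ₁ : ∀ c ∈ T₁, Set.InjOn θ ↑c := by
      intro c₁ hc₁
      obtain ⟨c, hc, rfl⟩ := mem_image.1 hc₁
      rw [coe_image]
      exact Set.InjOn.image_of_comp (by rw [hθg]; exact hθ c hc)
    have hcard : (T₁.sup id).card < n := by
      rw [← hn, sup_id_image_image]
      exact (card_le_card (image_update_id_subset_erase hab hb)).trans_lt
        (card_erase_lt_of_mem ha)
    calc dnfProb (T.image (image θ)) p = dnfProb (T₁.image (image θ)) p := by rw [himg]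
      _ ≤ dnfProb T₁ (p ∘ θ) := ih _ hcard T₁ hθ₁ rfl
      _ ≤ dnfProb T (p ∘ θ) := dnfProb_image_update_id_le (fun y => hp (θ y)) hab
          (congrArg p hθab) fun c hc hac hbc => hab (hθ c hc hac hbc hθab)

theorem dnf_dissociation_upper_bound_general {ι ι' : Type*} [DecidableEq ι] [DecidableEq ι']
    (T : Finset (Finset ι)) (T' : Finset (Finset ι'))
    (p : ι → ℝ) (p' : ι' → ℝ) (hp : ∀ i, 0 ≤ p i ∧ p i ≤ 1)
    (θ : ι' → ι)
    (hinj : ∀ c' ∈ T', Set.InjOn θ ↑c')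
    (hmap : T'.image (Finset.image θ) = T)
    (hprob : ∀ x', p' x' = p (θ x')) :
    dnfProb T p ≤ dnfProb T' p' := by
  rw [← hmap, show p' = p ∘ θ from funext hprob]
  exact dnfProb_image_le T' hinj hp

/-- Any dissociation `φ'` (terms `T'` over variables `ι'`, with a surjective
substitution `θ : ι' → ι` that is injective on each term and maps the terms of `φ'` onto the
terms of `φ`, each copy inheriting the probability of its original) of a positive DNF `φ`
(terms `T`) satisfies `P[φ'] ≥ P[φ]`. -/
theorem dnf_dissociation_upper_bound {ι ι' : Type*} [DecidableEq ι] [DecidableEq ι']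
    (T : Finset (Finset ι)) (T' : Finset (Finset ι'))
    (p : ι → ℝ) (p' : ι' → ℝ) (hp : ∀ i, 0 ≤ p i ∧ p i ≤ 1)
    (θ : ι' → ι) (hθ : Function.Surjective θ)
    (hinj : ∀ c' ∈ T', Set.InjOn θ ↑c')
    (hmap : T'.image (Finset.image θ) = T)
    (hprob : ∀ x', p' x' = p (θ x')) :
    dnfProb T p ≤ dnfProb T' p' :=
  dnf_dissociation_upper_bound_general T T' p p' hp θ hinj hmap hprob
end

section
/- The relative error of dissociation vanishes under downscaling: with φ = (r ∧ t1) ∨ (r ∧ t2) and φ' = (r ∧ t1) ∨ (r' ∧ t2) as above with probabilities p and q, replace p by f·p and q by f·q for a scaling factor f ∈ (0,1]. Then, assuming p, q > 0, lim_{f→0+} (P_f[φ'] − P_f[φ])/P_f[φ] = 0. -/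
/-- The relative error of dissociation vanishes under downscaling: with
`P_f[φ] = (fp)(fq)(2 − fq)` and `P_f[φ'] = (fp)(fq)(2 − (fp)(fq))` for scaling factor
`f ∈ (0,1]` and fixed `p, q ∈ (0,1]`,
`lim_{f→0⁺} (P_f[φ'] − P_f[φ]) / P_f[φ] = 0`. -/
theorem diamond_relative_error_vanishes (p q : ℝ)
    (hp0 : 0 < p) (hp1 : p ≤ 1) (hq0 : 0 < q) (hq1 : q ≤ 1) :
    Filter.Tendsto
      (fun f : ℝ =>
        ((f * p) * (f * q) * (2 - (f * p) * (f * q)) -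
            (f * p) * (f * q) * (2 - f * q)) /
          ((f * p) * (f * q) * (2 - f * q)))
      (nhdsWithin 0 (Set.Ioi 0)) (nhds 0) := by
  have h2 : Filter.Tendsto (fun f : ℝ => (f * q - f * p * (f * q)) / (2 - f * q))
      (nhdsWithin 0 (Set.Ioi 0)) (nhds 0) := by
    have : ContinuousAt (fun f : ℝ => (f * q - f * p * (f * q)) / (2 - f * q)) 0 := by
      apply ContinuousAt.div
      · fun_prop
      · fun_prop
      · norm_num
    have h := this.continuousWithinAt (s := Set.Ioi 0)
    simpa using h.tendsto
  apply h2.congr'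
  filter_upwards [self_mem_nhdsWithin, Ioo_mem_nhdsGT_of_mem (⟨le_refl 0, by positivity⟩ :
      (0:ℝ) ∈ Set.Ico 0 (1/q))] with f hf hf2
  have hf0 : 0 < f := hf
  have hfq : f * q < 1 := by
    have := hf2.2
    calc f * q < (1/q) * q := by exact mul_lt_mul_of_pos_right this hq0
    _ = 1 := by field_simp
  have hden : 2 - f * q ≠ 0 := by nlinarith
  have hfp : f * p ≠ 0 := by positivity
  field_simp
  ring
end

section
/- Monotonicity of dissociation under refinement: let Δ = (y1,...,ym) and Δ' = (y1',...,ym') be two dissociations of the same positive m-partite DNF (each yi, yi' a set of extra variables attached to the i-th block). If yi' ⊆ yi for all i, then for every assignment of probabilities P[φ^Δ] ≥ P[φ^Δ'] ≥ P[φ]. -/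
open Finset

/-- The probability of a dissociated `m`-partite positive DNF.  The terms are indexed by the
finite type `A`; the term `a` uses, in block `i`, the variable with key `v i a : K i`
(probability `p i (v i a)`), dissociated into the independent copy indexed by
`w i a : L i`.  All copies of all variables are mutually independent, and a copy indexed by
`(k, l)` is true with probability `p i k`.  The probability is computed by summing the
product weights of all satisfying assignments `ω`. -/
noncomputable def dissProb {m : ℕ} {A : Type*} [Fintype A]
    (K : Fin m → Type*) [∀ i, Fintype (K i)] [∀ i, DecidableEq (K i)]
    (L : Fin m → Type*) [∀ i, Fintype (L i)] [∀ i, DecidableEq (L i)]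
    (v : ∀ i, A → K i) (w : ∀ i, A → L i) (p : ∀ i, K i → ℝ) : ℝ :=
  ∑ ω ∈ Finset.univ.filter
      (fun ω : ∀ i, K i → L i → Bool => ∃ a : A, ∀ i, ω i (v i a) (w i a) = true),
    ∏ i, ∏ k, ∏ l, (if ω i k l then p i k else 1 - p i k)

/-!
Merging copies of variables, one block at a time, can only lower the probability of a partite
DNF. When only block `t` is merged, condition on all variables outside block `t`: the DNF becomes
the disjunction of the block-`t` variables of the surviving terms, whose probability is
`1 - ∏ (1 - q x)` over the distinct variables that occur. Merging replaces this set of variables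
by its image, which only drops factors lying in `[0, 1]`. To merge block by block, both
dissociations are embedded into the copies `X i ⊕ X' i`; unused copies do not change the
probability.
-/

open Function

lemma prod_one_sub_le_prod_image_one_sub {C : Type*} [DecidableEq C] {q : C → ℝ}
    (hq : ∀ c, 0 ≤ q c ∧ q c ≤ 1) {h : C → C} (hqh : ∀ c, q (h c) = q c) (D : Finset C) :
    ∏ c ∈ D, (1 - q c) ≤ ∏ c ∈ D.image h, (1 - q c) := by
  rw [← prod_fiberwise_of_maps_to fun c hc => mem_image_of_mem h hc]
  refine prod_le_prod (fun y _ => prod_nonneg fun c _ => by linarith [hq c]) fun y hy => ?_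
  obtain ⟨c, hc, rfl⟩ := mem_image.mp hy
  have hcF : c ∈ D.filter (fun c' => h c' = h c) := mem_filter.mpr ⟨hc, rfl⟩
  rw [← mul_prod_erase _ _ hcF, ← hqh c]
  refine mul_le_of_le_one_right (by linarith [hq (h c)]) (prod_le_one ?_ ?_) <;>
    intro c' _ <;> linarith [hq c']

section BernoulliWeight

variable {C : Type*} [Fintype C]

noncomputable def bernoulliWeight (q : C → ℝ) (η : C → Bool) : ℝ :=
  ∏ c, if η c then q c else 1 - q c

lemma bernoulliWeight_nonneg {q : C → ℝ} (hq : ∀ c, 0 ≤ q c ∧ q c ≤ 1) (η : C → Bool) :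
    0 ≤ bernoulliWeight q η :=
  prod_nonneg fun c _ => by split <;> linarith [hq c]

variable [DecidableEq C]

lemma sum_bernoulliWeight_piFinset (q : C → ℝ) (S : C → Finset Bool) :
    ∑ η ∈ Fintype.piFinset S, bernoulliWeight q η
      = ∏ c, ∑ b ∈ S c, if b then q c else 1 - q c :=
  (prod_univ_sum S fun c b => if b then q c else 1 - q c).symm

lemma sum_bernoulliWeight (q : C → ℝ) : ∑ η, bernoulliWeight q η = 1 := by
  rw [← Fintype.piFinset_univ, sum_bernoulliWeight_piFinset]
  simp

lemma sum_bernoulliWeight_forall_mem_eq_false (q : C → ℝ) (D : Finset C) :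
    ∑ η ∈ univ.filter (fun η : C → Bool => ∀ c ∈ D, η c = false), bernoulliWeight q η
      = ∏ c ∈ D, (1 - q c) := by
  have hD : univ.filter (fun η : C → Bool => ∀ c ∈ D, η c = false)
      = Fintype.piFinset fun c => if c ∈ D then {false} else univ := by
    ext η
    simp only [mem_filter, mem_univ, true_and, Fintype.mem_piFinset]
    refine forall_congr' fun c => ?_
    split_ifs with hc <;> simp [hc]
  rw [hD, sum_bernoulliWeight_piFinset, ← Fintype.prod_ite_mem D]
  refine prod_congr rfl fun c _ => ?_
  split_ifs <;> simp

lemma sum_bernoulliWeight_exists_mem_eq_true (q : C → ℝ) (D : Finset C) :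
    ∑ η ∈ univ.filter (fun η : C → Bool => ∃ c ∈ D, η c = true), bernoulliWeight q η
      = 1 - ∏ c ∈ D, (1 - q c) := by
  rw [← sum_bernoulliWeight_forall_mem_eq_false, ← sum_bernoulliWeight q,
    ← sum_filter_add_sum_filter_not univ (fun η : C → Bool => ∃ c ∈ D, η c = true)]
  simp

lemma sum_bernoulliWeight_exists_mem_image_le {q : C → ℝ} (hq : ∀ c, 0 ≤ q c ∧ q c ≤ 1)
    {h : C → C} (hqh : ∀ c, q (h c) = q c) (D : Finset C) :
    ∑ η ∈ univ.filter (fun η : C → Bool => ∃ c ∈ D.image h, η c = true), bernoulliWeight q η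
      ≤ ∑ η ∈ univ.filter (fun η : C → Bool => ∃ c ∈ D, η c = true), bernoulliWeight q η := by
  simp only [sum_bernoulliWeight_exists_mem_eq_true]
  linarith [prod_one_sub_le_prod_image_one_sub hq hqh D]

end BernoulliWeight

lemma sum_bernoulliWeight_comp_eq {C C' : Type*} [Fintype C] [Fintype C'] [DecidableEq C']
    (q : C → ℝ) (q' : C' → ℝ) {j : C → C'} (hj : Injective j) (hq : ∀ c, q' (j c) = q c)
    (η : C → Bool) :
    ∑ η' ∈ univ.filter (fun η' : C' → Bool => η' ∘ j = η), bernoulliWeight q' η'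
      = bernoulliWeight q η := by
  have hfib : univ.filter (fun η' : C' → Bool => η' ∘ j = η)
      = Fintype.piFinset fun c' => univ.filter fun b => ∀ c, j c = c' → b = η c := by
    ext η'
    simp only [mem_filter, mem_univ, true_and, Fintype.mem_piFinset, funext_iff, comp_apply]
    exact ⟨fun h c' c hc => hc ▸ h c, fun h c => h (j c) c rfl⟩
  rw [hfib, sum_bernoulliWeight_piFinset, bernoulliWeight]
  symm
  refine Fintype.prod_of_injective j hj _ _ (fun c' hc' => ?_) fun c => ?_
  · rw [filter_true_of_mem fun b _ c hc => (hc' ⟨c, hc⟩).elim]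
    simp
  · have hS : (univ.filter fun b => ∀ c', j c' = j c → b = η c') = {η c} := by
      ext b
      simp only [mem_filter, mem_univ, true_and, mem_singleton]
      exact ⟨fun hb => hb c rfl, fun hb c' hc' => hj hc' ▸ hb⟩
    rw [hS, sum_singleton, hq]

namespace PartiteDNF

variable {I : Type*} [Fintype I] [DecidableEq I] {X : I → Type*} [∀ i, Fintype (X i)]
  [∀ i, DecidableEq (X i)] {A : Type*} [Fintype A]

noncomputable def prob (q : ∀ i, X i → ℝ) (τ : A → ∀ i, X i) : ℝ :=
  ∑ ω ∈ univ.filter (fun ω : ∀ i, X i → Bool => ∃ a, ∀ i, ω i (τ a i) = true),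
    ∏ i, bernoulliWeight (q i) (ω i)

lemma prob_comp_injective {Y : I → Type*} [∀ i, Fintype (Y i)] [∀ i, DecidableEq (Y i)]
    (q : ∀ i, X i → ℝ) (r : ∀ i, Y i → ℝ) {j : ∀ i, X i → Y i} (hj : ∀ i, Injective (j i))
    (hr : ∀ i x, r i (j i x) = q i x) (τ : A → ∀ i, X i) :
    prob r (fun a i => j i (τ a i)) = prob q τ := by
  set res : (∀ i, Y i → Bool) → ∀ i, X i → Bool := fun ω i => ω i ∘ j i
  have hmarg : ∀ ω₀ : ∀ i, X i → Bool,
      ∑ ω ∈ univ.filter (fun ω => res ω = ω₀), ∏ i, bernoulliWeight (r i) (ω i)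
        = ∏ i, bernoulliWeight (q i) (ω₀ i) := by
    intro ω₀
    have hfib : univ.filter (fun ω => res ω = ω₀)
        = Fintype.piFinset fun i => univ.filter fun σ : Y i → Bool => σ ∘ j i = ω₀ i := by
      ext ω
      simp [res, funext_iff]
    rw [hfib, ← prod_univ_sum]
    exact prod_congr rfl fun i _ => sum_bernoulliWeight_comp_eq _ _ (hj i) (hr i) _
  rw [prob, prob, sum_filter, sum_filter, ← sum_fiberwise univ res]
  refine sum_congr rfl fun ω₀ _ => ?_
  rw [← hmarg]
  calc _ = ∑ ω ∈ univ.filter (fun ω => res ω = ω₀),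
        if ∃ a, ∀ i, ω₀ i (τ a i) = true then ∏ i, bernoulliWeight (r i) (ω i) else 0 :=
      sum_congr rfl fun ω hω => by rw [← (mem_filter.mp hω).2]; rfl
    _ = _ := by rw [sum_ite_irrel, sum_const_zero]

lemma prob_eq_sum_mul_sum_exists_mem (q : ∀ i, X i → ℝ) (τ : A → ∀ i, X i) (t : I) :
    prob q τ = ∑ ρ : (∀ i : {i // i ≠ t}, X i → Bool),
      (∏ i : {i // i ≠ t}, bernoulliWeight (q i) (ρ i)) *
        ∑ σ ∈ univ.filter (fun σ : X t → Bool =>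
          ∃ x ∈ (univ.filter fun a => ∀ i : {i // i ≠ t}, ρ i (τ a i) = true).image (τ · t),
            σ x = true),
          bernoulliWeight (q t) σ := by
  have hsplit : ∀ (ω : ∀ i, X i → Bool) (a : A),
      (∀ i, ω i (τ a i) = true) ↔ ω t (τ a t) = true ∧ ∀ i : {i // i ≠ t}, ω i (τ a i) = true :=
    fun ω a => ⟨fun h => ⟨h t, fun i => h i⟩, fun ⟨ht, hne⟩ i => by
      rcases eq_or_ne i t with rfl | hi
      exacts [ht, hne ⟨i, hi⟩]⟩
  rw [prob, sum_filter, Fintype.sum_equiv (Equiv.piSplitAt t fun i => X i → Bool) _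
    (fun σρ => if ∃ a, σρ.1 (τ a t) = true ∧ ∀ i : {i // i ≠ t}, σρ.2 i (τ a i) = true then
      bernoulliWeight (q t) σρ.1 * ∏ i : {i // i ≠ t}, bernoulliWeight (q i) (σρ.2 i) else 0)
    fun ω => by
      simp only [hsplit, Equiv.piSplitAt_apply, Fintype.prod_eq_mul_prod_subtype_ne _ t],
    Fintype.sum_prod_type, sum_comm]
  refine sum_congr rfl fun ρ _ => ?_
  rw [sum_filter, mul_sum]
  refine sum_congr rfl fun σ _ => ?_
  have hev : (∃ a, σ (τ a t) = true ∧ ∀ i : {i // i ≠ t}, ρ i (τ a i) = true) ↔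
      ∃ x ∈ (univ.filter fun a => ∀ i : {i // i ≠ t}, ρ i (τ a i) = true).image (τ · t),
        σ x = true := by
    simp only [mem_image, mem_filter, mem_univ, true_and]
    exact ⟨fun ⟨a, hσ, hρ⟩ => ⟨_, ⟨a, hρ, rfl⟩, hσ⟩, fun ⟨_, ⟨a, hρ, rfl⟩, hσ⟩ => ⟨a, hσ, hρ⟩⟩
  simp only [hev]
  split_ifs <;> ring

lemma prob_update_le {q : ∀ i, X i → ℝ} (hq : ∀ i x, 0 ≤ q i x ∧ q i x ≤ 1) {t : I}
    {h : X t → X t} (hqh : ∀ x, q t (h x) = q t x) (τ : A → ∀ i, X i) :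
    prob q (fun a => update (τ a) t (h (τ a t))) ≤ prob q τ := by
  rw [prob_eq_sum_mul_sum_exists_mem _ _ t, prob_eq_sum_mul_sum_exists_mem _ _ t]
  refine sum_le_sum fun ρ _ => mul_le_mul_of_nonneg_left ?_ <|
    prod_nonneg fun i _ => bernoulliWeight_nonneg (hq i) _
  have hoff : ∀ a (i : {i // i ≠ t}), update (τ a) t (h (τ a t)) i = τ a i :=
    fun a i => update_of_ne i.2 _ _
  set S := univ.filter fun a => ∀ i : {i // i ≠ t}, ρ i (τ a i) = true
  have hS : univ.filter (fun a => ∀ i : {i // i ≠ t},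
      ρ i (update (τ a) t (h (τ a t)) i) = true) = S := by simp only [hoff, S]
  rw [hS]
  simp only [update_self]
  rw [show S.image (fun a => h (τ a t)) = (S.image (τ · t)).image h from image_image.symm]
  -- the two sides differ only in the `Decidable` instances of the filters
  exact (sum_bernoulliWeight_exists_mem_image_le (hq t) hqh _).trans_eq (by congr)

lemma prob_map_le {X' : I → Type*} [∀ i, Fintype (X' i)] [∀ i, DecidableEq (X' i)]
    {q : ∀ i, X i → ℝ} {q' : ∀ i, X' i → ℝ} (hq : ∀ i x, 0 ≤ q i x ∧ q i x ≤ 1)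
    (hq' : ∀ i x, 0 ≤ q' i x ∧ q' i x ≤ 1) {G : ∀ i, X i → X' i}
    (hG : ∀ i x, q' i (G i x) = q i x) (τ : A → ∀ i, X i) :
    prob q' (fun a i => G i (τ a i)) ≤ prob q τ := by
  let qq : ∀ i, X i ⊕ X' i → ℝ := fun i => Sum.elim (q i) (q' i)
  let hybrid : Finset I → A → ∀ i, X i ⊕ X' i := fun s a i =>
    if i ∈ s then .inr (G i (τ a i)) else .inl (τ a i)
  have hstep : ∀ s, prob qq (hybrid s) ≤ prob qq (hybrid ∅) := by
    intro s
    induction s using Finset.induction_on with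
    | empty => exact le_rfl
    | insert t s ht ih =>
      refine le_trans ?_ ih
      have : hybrid (insert t s) = fun a =>
          update (hybrid s a) t (Sum.elim (.inr ∘ G t) .inr (hybrid s a t)) := by
        funext a i
        rcases eq_or_ne i t with rfl | hi
        · simp [hybrid, ht]
        · simp [hybrid, hi]
      rw [this]
      refine prob_update_le (fun i x => ?_) (fun x => ?_) _
      · cases x <;> simp [qq, hq, hq']
      · cases x <;> simp [qq, hG]
  have hfine : hybrid ∅ = fun a i => .inl (τ a i) := by
    funext a i
    simp [hybrid]
  have hcoarse : hybrid univ = fun a i => .inr (G i (τ a i)) := by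
    funext a i
    simp [hybrid]
  calc prob q' (fun a i => G i (τ a i)) = prob qq (hybrid univ) := by
        rw [hcoarse, prob_comp_injective q' qq (fun _ => Sum.inr_injective) (fun _ _ => rfl)]
    _ ≤ prob qq (hybrid ∅) := hstep univ
    _ = prob q τ := by
        rw [hfine, prob_comp_injective q qq (fun _ => Sum.inl_injective) (fun _ _ => rfl)]

end PartiteDNF

section Dissociation

variable {m : ℕ} {A : Type*} [Fintype A] (K : Fin m → Type*) [∀ i, Fintype (K i)]
  [∀ i, DecidableEq (K i)]

lemma dissProb_eq_prob (L : Fin m → Type*) [∀ i, Fintype (L i)] [∀ i, DecidableEq (L i)]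
    (v : ∀ i, A → K i) (w : ∀ i, A → L i) (p : ∀ i, K i → ℝ) :
    dissProb K L v w p = PartiteDNF.prob (fun i x => p i x.1) (fun a i => (v i a, w i a)) := by
  rw [dissProb, PartiteDNF.prob, sum_filter, sum_filter]
  refine Fintype.sum_equiv (Equiv.piCongrRight fun i => Equiv.curry (K i) (L i) Bool).symm _ _
    fun ω => ?_
  simp only [bernoulliWeight, Fintype.prod_prod_type]
  rfl

lemma dissProb_comp_le (L L' : Fin m → Type*) [∀ i, Fintype (L i)] [∀ i, DecidableEq (L i)]
    [∀ i, Fintype (L' i)] [∀ i, DecidableEq (L' i)] (v : ∀ i, A → K i) (w : ∀ i, A → L i)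
    (g : ∀ i, L i → L' i) {p : ∀ i, K i → ℝ} (hp : ∀ i k, 0 ≤ p i k ∧ p i k ≤ 1) :
    dissProb K L' v (fun i a => g i (w i a)) p ≤ dissProb K L v w p := by
  rw [dissProb_eq_prob, dissProb_eq_prob]
  exact PartiteDNF.prob_map_le (X' := fun i => K i × L' i) (fun i x => hp i x.1)
    (fun i x => hp i x.1) (G := fun i x => (x.1, g i x.2)) (fun _ _ => rfl)
    (fun a i => (v i a, w i a))

end Dissociation

/-- Monotonicity of dissociation under refinement: if the dissociation `w`
(copy index `L`) refines the dissociation `w'` (copy index `L'`), i.e. `w'` factors through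
`w` via maps `g i`, then for every assignment of probabilities `p i k ∈ [0,1]`,
`P[φ^Δ] ≥ P[φ^Δ'] ≥ P[φ]`, where `P[φ]` is the probability of the original (trivial,
undissociated) DNF. -/
theorem dissociation_refinement_monotone {m : ℕ} {A : Type*} [Fintype A]
    (K : Fin m → Type*) [∀ i, Fintype (K i)] [∀ i, DecidableEq (K i)]
    (L L' : Fin m → Type*) [∀ i, Fintype (L i)] [∀ i, DecidableEq (L i)]
    [∀ i, Fintype (L' i)] [∀ i, DecidableEq (L' i)]
    (v : ∀ i, A → K i) (w : ∀ i, A → L i) (w' : ∀ i, A → L' i)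
    (p : ∀ i, K i → ℝ) (hp : ∀ i k, 0 ≤ p i k ∧ p i k ≤ 1)
    (g : ∀ i, L i → L' i) (hg : ∀ i a, w' i a = g i (w i a)) :
    dissProb K L' v w' p ≤ dissProb K L v w p ∧
    dissProb K (fun _ => Unit) v (fun _ _ => ()) p ≤ dissProb K L' v w' p := by
  obtain rfl : w' = fun i a => g i (w i a) := funext₂ hg
  exact ⟨dissProb_comp_le K L L' v w g hp,
    dissProb_comp_le K L' (fun _ => Unit) v _ (fun _ _ => ()) hp⟩
end
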